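/- There exists an absolute constant c > 0 such that for all q, t ∈ ℂ with 0 < |q| ≤ e^{−π√3}, |q|^{1/2} ≤ |t| ≤ 1, and t ≠ 1, one has | log|g₀(t)| − log|t − 1| | ≤ c, where g₀(t) = (t − 1)·∏_{n=1}^∞ (1 − qⁿ t)(1 − qⁿ t^{−1}). -/

import Mathlib

/-! The theta factors satisfy `‖(1 - qⁿ⁺¹t)(1 - qⁿ⁺¹t⁻¹) - 1‖ ≤ 3 rⁿ⁺¹` with `r = |q|^{1/2}`,
since `|q|^{1/2} ≤ |t| ≤ 1`; and `|q| ≤ e^{-π√3} < 1/100` gives `r ≤ 1/10`. Hence the product is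
`exp S` with `‖S‖ ≤ (3/2) ∑ 3 rⁿ⁺¹ ≤ 1/2`, and `log|g₀(t)| - log|t - 1| = Re S`. -/

open Real

lemma norm_one_sub_mul_one_sub_sub_one_le {R : Type*} [NormedRing R] (a b : R) :
    ‖(1 - a) * (1 - b) - 1‖ ≤ ‖a‖ * ‖b‖ + ‖a‖ + ‖b‖ := by
  have hexpand : (1 - a) * (1 - b) - 1 = a * b - a - b := by noncomm_ring
  rw [hexpand]
  calc ‖a * b - a - b‖ ≤ ‖a * b - a‖ + ‖b‖ := norm_sub_le _ _
    _ ≤ ‖a * b‖ + ‖a‖ + ‖b‖ := by gcongr; exact norm_sub_le _ _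
    _ ≤ ‖a‖ * ‖b‖ + ‖a‖ + ‖b‖ := by gcongr; exact norm_mul_le a b

lemma exists_tprod_eq_exp_of_norm_sub_one_le {ι : Type*} {f : ι → ℂ}
    (hf : ∀ i, ‖f i - 1‖ ≤ 1 / 2) (hs : Summable fun i ↦ ‖f i - 1‖) :
    ∃ S : ℂ, ∏' i, f i = Complex.exp S ∧ ‖S‖ ≤ 3 / 2 * ∑' i, ‖f i - 1‖ := by
  have hlog (i : ι) : ‖Complex.log (f i)‖ ≤ 3 / 2 * ‖f i - 1‖ := by
    simpa using Complex.norm_log_one_add_half_le_self (hf i)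
  have hne (i : ι) : f i ≠ 0 := fun h ↦ by have := hf i; norm_num [h] at this
  have hsum : Summable fun i ↦ ‖Complex.log (f i)‖ :=
    (hs.mul_left (3 / 2)).of_nonneg_of_le (fun _ ↦ norm_nonneg _) hlog
  refine ⟨∑' i, Complex.log (f i), (Complex.cexp_tsum_eq_tprod hne hsum.of_norm).symm, ?_⟩
  calc ‖∑' i, Complex.log (f i)‖ ≤ ∑' i, ‖Complex.log (f i)‖ := norm_tsum_le_tsum_norm hsum
    _ ≤ ∑' i, 3 / 2 * ‖f i - 1‖ := hsum.tsum_le_tsum hlog (hs.mul_left _)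
    _ = 3 / 2 * ∑' i, ‖f i - 1‖ := tsum_mul_left

lemma log_norm_mul_exp_sub_log_norm {z : ℂ} (hz : z ≠ 0) (S : ℂ) :
    log ‖z * Complex.exp S‖ - log ‖z‖ = S.re := by
  rw [norm_mul, Complex.norm_exp, log_mul (norm_ne_zero_iff.mpr hz) (exp_pos _).ne', log_exp]
  ring

lemma exp_neg_pi_mul_sqrt_three_le : exp (-(π * √3)) ≤ 1 / 100 := by
  have hsqrt : 5 / 3 ≤ √3 := le_sqrt_of_sq_le (by norm_num)
  have hexp5 : 100 ≤ exp 5 := by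
    have he : (2.7 : ℝ) ≤ exp 1 := exp_one_gt_d9.le.trans' (by norm_num)
    calc (100 : ℝ) ≤ 2.7 ^ 5 := by norm_num
      _ ≤ exp 1 ^ 5 := by gcongr
      _ = exp 5 := by rw [← exp_nat_mul]; norm_num
  rw [exp_neg, inv_le_comm₀ (exp_pos _) (by norm_num)]
  norm_num
  calc (100 : ℝ) ≤ exp 5 := hexp5
    _ ≤ exp (π * √3) := by gcongr; nlinarith [pi_gt_three]

lemma norm_theta_factor_sub_one_le {q t : ℂ} {r : ℝ} (hr : 0 < r) (hr1 : r ≤ 1)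
    (hq : ‖q‖ = r ^ 2) (hrt : r ≤ ‖t‖) (ht : ‖t‖ ≤ 1) (n : ℕ) :
    ‖(1 - q ^ (n + 1) * t) * (1 - q ^ (n + 1) * t⁻¹) - 1‖ ≤ 3 * r ^ (n + 1) := by
  have hrn : r ^ (2 * (n + 1)) ≤ r ^ (n + 1) := pow_le_pow_of_le_one hr.le hr1 (by omega)
  have hrn1 : r ^ (n + 1) ≤ 1 := pow_le_one₀ hr.le hr1
  have hqn : ‖q ^ (n + 1)‖ = r * r ^ (2 * n + 1) := by
    rw [norm_pow, hq, ← pow_mul, ← pow_succ']; ring_nf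
  have hmul : ‖q ^ (n + 1) * t‖ ≤ r ^ (n + 1) := by
    calc ‖q ^ (n + 1) * t‖ ≤ ‖q ^ (n + 1)‖ * 1 := by rw [norm_mul]; gcongr
      _ = r ^ (2 * (n + 1)) := by rw [hqn]; ring
      _ ≤ r ^ (n + 1) := hrn
  have hdiv : ‖q ^ (n + 1) * t⁻¹‖ ≤ r ^ (n + 1) := by
    calc ‖q ^ (n + 1) * t⁻¹‖ = ‖q ^ (n + 1)‖ / ‖t‖ := by rw [norm_mul, norm_inv, div_eq_mul_inv]
      _ ≤ r * r ^ (2 * n + 1) / r := by rw [hqn]; gcongr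
      _ ≤ r ^ (n + 1) := by
        rw [mul_div_cancel_left₀ _ hr.ne']
        exact pow_le_pow_of_le_one hr.le hr1 (by omega)
  calc _ ≤ _ := norm_one_sub_mul_one_sub_sub_one_le _ _
    _ ≤ r ^ (n + 1) * r ^ (n + 1) + r ^ (n + 1) + r ^ (n + 1) := by gcongr
    _ ≤ 3 * r ^ (n + 1) := by nlinarith [pow_pos hr (n + 1)]

/-- There is an absolute constant `c > 0` such that for all `q, t ∈ ℂ` with
`0 < |q| ≤ e^{−π√3}`, `|q|^{1/2} ≤ |t| ≤ 1` and `t ≠ 1`, the function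
`g₀(t) = (t − 1)·∏_{n≥1} (1 − qⁿt)(1 − qⁿt⁻¹)` satisfies
`| log|g₀(t)| − log|t − 1| | ≤ c`. -/
theorem log_g0_near_log_dist :
    ∃ c : ℝ, 0 < c ∧
      ∀ q t : ℂ, 0 < ‖q‖ →
        ‖q‖ ≤ Real.exp (-(π * Real.sqrt 3)) →
        ‖q‖ ^ ((1 : ℝ) / 2) ≤ ‖t‖ → ‖t‖ ≤ 1 → t ≠ 1 →
          |Real.log (‖
              ((t - 1) * ∏' n : ℕ, (1 - q ^ (n + 1) * t) * (1 - q ^ (n + 1) * t⁻¹))‖) -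
            Real.log (‖t - 1‖)| ≤ c := by
  refine ⟨1, one_pos, fun q t hq0 hq1 hrt ht1 ht_ne ↦ ?_⟩
  set r := ‖q‖ ^ ((1 : ℝ) / 2)
  have hr0 : 0 < r := rpow_pos_of_pos hq0 _
  have hq : ‖q‖ = r ^ 2 := by rw [← rpow_natCast, ← rpow_mul hq0.le]; norm_num
  have hr : r ≤ 1 / 10 := by nlinarith [exp_neg_pi_mul_sqrt_three_le]
  have hfactor := norm_theta_factor_sub_one_le hr0 (by linarith) hq hrt ht1
  have hgeom : HasSum (fun n : ℕ ↦ 3 * r ^ (n + 1)) (3 * r / (1 - r)) := by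
    simpa [pow_succ', mul_assoc, div_eq_mul_inv] using
      ((hasSum_geometric_of_lt_one hr0.le (by linarith)).mul_left r).mul_left 3
  have hsummable := hgeom.summable.of_nonneg_of_le (fun _ ↦ norm_nonneg _) hfactor
  have hhalf (n : ℕ) : 3 * r ^ (n + 1) ≤ 1 / 2 := by
    linarith [pow_le_of_le_one hr0.le (by linarith : r ≤ 1) n.add_one_ne_zero]
  obtain ⟨S, hprod, hS⟩ :=
    exists_tprod_eq_exp_of_norm_sub_one_le (fun n ↦ (hfactor n).trans (hhalf n)) hsummable
  have hsum : ∑' n, ‖(1 - q ^ (n + 1) * t) * (1 - q ^ (n + 1) * t⁻¹) - 1‖ ≤ 3 * r / (1 - r) :=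
    hgeom.tsum_eq ▸ hsummable.tsum_le_tsum hfactor hgeom.summable
  have hbound : 3 * r / (1 - r) ≤ 1 / 3 := by rw [div_le_iff₀ (by linarith)]; linarith
  rw [hprod, log_norm_mul_exp_sub_log_norm (sub_ne_zero.mpr ht_ne)]
  linarith [Complex.abs_re_le_norm S]
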